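/- arXiv:1903.01005 — 4 statements merged into one kernel-verified Lean document; each statement's English description precedes it below -/
import Mathlib

section
/- Strict positivity of the motile population: under the feasibility conditions, if m(0) > 0 then m(t) > 0 for all t ≥ 0. -/
/-!
Since `u' = -(r/K) m u`, the integrating factor `exp ((r/K) ∫ m)` keeps `u` at the sign of
`u 0 ≥ 0`. Likewise `m' = -(r/K) u m + 2 (r/K) m(t-τ) u(t-τ)`, and the delayed source term is
nonnegative on `[0, τ]` by the history, then on `[τ, 2τ]` by what was shown on `[0, τ]`, and so
on; on each step the integrating factor `exp ((r/K) ∫ u)` gives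
`m t ≥ m 0 · exp (-(r/K) ∫₀ᵗ u) > 0`.
-/

open Set Real

-- `f · exp (∫ₓ a)` is nondecreasing: its derivative is `b · exp (∫ₓ a) ≥ 0`.
theorem mul_exp_neg_integral_le_of_hasDerivAt {f a b : ℝ → ℝ} {x y : ℝ} (hxy : x ≤ y)
    (ha : Continuous a) (hf : ∀ t ∈ Icc x y, HasDerivAt f (-a t * f t + b t) t)
    (hb : ∀ t ∈ Icc x y, 0 ≤ b t) :
    f x * exp (-∫ s in x..y, a s) ≤ f y := by
  set E : ℝ → ℝ := fun t => exp (∫ s in x..t, a s)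
  have hE : ∀ t, HasDerivAt E (E t * a t) t := fun t =>
    (intervalIntegral.integral_hasDerivAt_right (ha.intervalIntegrable x t)
      ha.aestronglyMeasurable.stronglyMeasurableAtFilter ha.continuousAt).exp
  have hg : ∀ t ∈ Icc x y, HasDerivAt (fun t => f t * E t) (b t * E t) t := fun t ht =>
    ((hf t ht).mul (hE t)).congr_deriv (by ring)
  have hmono : MonotoneOn (fun t => f t * E t) (Icc x y) := by
    refine monotoneOn_of_hasDerivWithinAt_nonneg (f' := fun t => b t * E t) (convex_Icc x y)
      (fun t ht => (hg t ht).continuousAt.continuousWithinAt) (fun t ht => ?_) (fun t ht => ?_)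
    · exact (hg t (interior_subset ht)).hasDerivWithinAt
    · exact mul_nonneg (hb t (interior_subset ht)) (exp_pos _).le
  have hxy' : f x ≤ f y * E y := by
    simpa [E] using hmono (left_mem_Icc.2 hxy) (right_mem_Icc.2 hxy) hxy
  calc f x * exp (-∫ s in x..y, a s) ≤ f y * E y * exp (-∫ s in x..y, a s) :=
        mul_le_mul_of_nonneg_right hxy' (exp_pos _).le
    _ = f y := by simp only [E, mul_assoc, ← exp_add, add_neg_cancel, exp_zero, mul_one]

-- Induction principle behind the method of steps for delay equations.
theorem forall_nonneg_of_delay_step {τ : ℝ} (hτ : 0 < τ) {P : ℝ → Prop}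
    (step : ∀ t, 0 ≤ t → (∀ s, 0 ≤ s → s ≤ t - τ → P s) → P t) :
    ∀ t, 0 ≤ t → P t := by
  have h : ∀ n : ℕ, ∀ t, 0 ≤ t → t ≤ n * τ → P t := by
    intro n
    induction n with
    | zero =>
      refine fun t ht ht0 => step t ht fun s hs hst => ?_
      norm_num at ht0
      linarith
    | succ n ih =>
      refine fun t ht htn => step t ht fun s hs hst => ih s hs ?_
      push_cast at htn
      linarith
  intro t ht
  obtain ⟨n, hn⟩ := exists_nat_ge (t / τ)
  exact h n t ht ((div_le_iff₀ hτ).1 hn)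

theorem stmt_6_general
    (K r τ : ℝ) (hK : 0 < K) (hr : 0 < r) (hτ : 0 < τ)
    (m u : ℝ → ℝ)
    (hmc : Continuous m) (huc : Continuous u)
    (hdm : ∀ t : ℝ, 0 ≤ t →
      HasDerivAt m (-(r / K) * m t * u t + 2 * (r / K) * m (t - τ) * u (t - τ)) t)
    (hdu : ∀ t : ℝ, 0 ≤ t → HasDerivAt u (-(r / K) * m t * u t) t)
    (hmnn : ∀ θ ∈ Set.Icc (-τ) (0 : ℝ), 0 ≤ m θ)
    (hunn : ∀ θ ∈ Set.Icc (-τ) (0 : ℝ), 0 ≤ u θ)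
    (hmpos : 0 < m 0)
:
    ∀ t : ℝ, 0 ≤ t → 0 < m t := by
  have hc : 0 < r / K := div_pos hr hK
  have hu : ∀ t, 0 ≤ t → 0 ≤ u t := fun t ht => by
    refine le_trans ?_ (mul_exp_neg_integral_le_of_hasDerivAt (a := fun s => r / K * m s)
      (b := fun _ => 0) ht (continuous_const.mul hmc)
      (fun s hs => (hdu s hs.1).congr_deriv (by ring)) (fun _ _ => le_rfl))
    exact mul_nonneg (hunn 0 ⟨by linarith, le_rfl⟩) (exp_pos _).le
  refine forall_nonneg_of_delay_step hτ fun t ht hprev => ?_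
  have hdelay : ∀ s ∈ Icc 0 t, 0 ≤ 2 * (r / K) * (m (s - τ) * u (s - τ)) := fun s hs => by
    refine mul_nonneg (by positivity) ?_
    rcases le_or_gt (s - τ) 0 with hsτ | hsτ
    · exact mul_nonneg (hmnn _ ⟨by linarith [hs.1], hsτ⟩) (hunn _ ⟨by linarith [hs.1], hsτ⟩)
    · exact mul_nonneg (hprev _ hsτ.le (by linarith [hs.2])).le (hu _ hsτ.le)
  refine lt_of_lt_of_le (mul_pos hmpos (exp_pos _)) (mul_exp_neg_integral_le_of_hasDerivAt
    (a := fun s => r / K * u s) ht (continuous_const.mul huc)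
    (fun s hs => (hdm s hs.1).congr_deriv (by ring)) hdelay)

theorem stmt_6
    (K r τ : ℝ) (hK : 0 < K) (hr : 0 < r) (hτ : 0 < τ)
    (m p q u : ℝ → ℝ)
    (hmc : Continuous m) (hpc : Continuous p) (hqc : Continuous q) (huc : Continuous u)
    (hdm : ∀ t : ℝ, 0 ≤ t →
      HasDerivAt m (-(r / K) * m t * u t + 2 * (r / K) * m (t - τ) * u (t - τ)) t)
    (hdp : ∀ t : ℝ, 0 ≤ t →
      HasDerivAt p ((r / K) * m t * u t - (r / K) * m (t - τ) * u (t - τ)) t)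
    (hdq : ∀ t : ℝ, 0 ≤ t →
      HasDerivAt q ((r / K) * m t * u t - (r / K) * m (t - τ) * u (t - τ)) t)
    (hdu : ∀ t : ℝ, 0 ≤ t → HasDerivAt u (-(r / K) * m t * u t) t)
    (hmnn : ∀ θ ∈ Set.Icc (-τ) (0 : ℝ), 0 ≤ m θ)
    (hpnn : ∀ θ ∈ Set.Icc (-τ) (0 : ℝ), 0 ≤ p θ)
    (hqnn : ∀ θ ∈ Set.Icc (-τ) (0 : ℝ), 0 ≤ q θ)
    (hunn : ∀ θ ∈ Set.Icc (-τ) (0 : ℝ), 0 ≤ u θ)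
    (hsum : m 0 + p 0 + q 0 + u 0 = K)
    (hpin : p 0 = (r / K) * ∫ s in (-τ)..(0 : ℝ), m s * u s)
    (hqin : q 0 = (r / K) * ∫ s in (-τ)..(0 : ℝ), m s * u s)
    (hmpos : 0 < m 0)
:
    ∀ t : ℝ, 0 ≤ t → 0 < m t :=
  stmt_6_general K r τ hK hr hτ m u hmc huc hdm hdu hmnn hunn hmpos
end

section
/- (Lemma 1, forward invariance of the feasible set) Under the feasibility conditions, for every t ≥ 0 the following hold: m(t) ≥ 0, p(t) ≥ 0, q(t) ≥ 0, u(t) ≥ 0; m(t) + p(t) + q(t) + u(t) = K; and p(t) = q(t) = (r/K) ∫_{t-τ}^{t} m(s)u(s) ds. -/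
/-!
The mass `m + p + q + u` and the differences `p - (r/K) ∫_{t-τ}^t m u`, `q - (r/K) ∫_{t-τ}^t m u`
have zero derivative on `[0, ∞)`, so they keep their initial values. Nonnegativity of `u` and `m`
comes from integrating factors: `u · exp((r/K) ∫ m)` is constant, and `m · exp((r/K) ∫ u)` is
nondecreasing as long as the delayed source `2 (r/K) m(t-τ) u(t-τ)` is nonnegative, which holds
on `[0, (n+1)τ]` once `m ≥ 0` is known on `[-τ, nτ]` (method of steps). Nonnegativity of `p` and `q`
then follows from their integral representation.
-/

open Set Real

theorem monotoneOn_Icc_of_hasDerivAt_nonneg {f f' : ℝ → ℝ} {a b : ℝ}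
    (hf : ∀ t ∈ Icc a b, HasDerivAt f (f' t) t) (hf' : ∀ t ∈ Ioo a b, 0 ≤ f' t) :
    MonotoneOn f (Icc a b) := by
  refine monotoneOn_of_hasDerivWithinAt_nonneg (f' := f') (convex_Icc a b)
    (fun t ht => (hf t ht).continuousAt.continuousWithinAt) (fun t ht => ?_) (fun t ht => ?_)
  all_goals rw [interior_Icc] at ht
  · exact (hf t (Ioo_subset_Icc_self ht)).hasDerivWithinAt
  · exact hf' t ht

theorem eqOn_Ici_of_hasDerivAt_eq {f g f' : ℝ → ℝ} {a : ℝ}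
    (hf : ∀ t ∈ Ici a, HasDerivAt f (f' t) t) (hg : ∀ t ∈ Ici a, HasDerivAt g (f' t) t)
    (ha : f a = g a) : EqOn f g (Ici a) := fun t ht =>
  eq_of_has_deriv_right_eq (fun s hs => (hf s hs.1).hasDerivWithinAt)
    (fun s hs => (hg s hs.1).hasDerivWithinAt)
    (fun s hs => (hf s hs.1).continuousAt.continuousWithinAt)
    (fun s hs => (hg s hs.1).continuousAt.continuousWithinAt) ha t ⟨ht, le_rfl⟩

theorem hasDerivAt_integral_sub_delay {f : ℝ → ℝ} (hf : Continuous f) (τ t : ℝ) :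
    HasDerivAt (fun t => ∫ s in (t - τ)..t, f s) (f t - f (t - τ)) t := by
  have hF : ∀ x, HasDerivAt (fun t => ∫ s in (0 : ℝ)..t, f s) (f x) x := fun x =>
    (hf.integral_hasStrictDerivAt 0 x).hasDerivAt
  have hsub := (hF t).sub (((hF (t - τ)).comp t ((hasDerivAt_id t).sub_const τ)).congr_deriv
    (mul_one _))
  refine hsub.congr_of_eventuallyEq (Filter.Eventually.of_forall fun x => ?_)
  exact (intervalIntegral.integral_interval_sub_left (hf.intervalIntegrable _ _)
    (hf.intervalIntegrable _ _)).symm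

theorem nonneg_of_hasDerivAt_linear {x a b : ℝ → ℝ} {t₀ T : ℝ} (ha : Continuous a)
    (hx : ∀ t ∈ Icc t₀ T, HasDerivAt x (-a t * x t + b t) t) (hb : ∀ t ∈ Ioo t₀ T, 0 ≤ b t)
    (hx₀ : 0 ≤ x t₀) : ∀ t ∈ Icc t₀ T, 0 ≤ x t := by
  set E := fun t => exp (∫ s in t₀..t, a s)
  have hE : ∀ t, HasDerivAt E (E t * a t) t := fun t =>
    (ha.integral_hasStrictDerivAt t₀ t).hasDerivAt.exp
  have hmono : MonotoneOn (fun t => x t * E t) (Icc t₀ T) :=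
    monotoneOn_Icc_of_hasDerivAt_nonneg (f' := fun t => b t * E t)
      (fun t ht => ((hx t ht).mul (hE t)).congr_deriv (by ring))
      (fun t ht => mul_nonneg (hb t ht) (exp_pos _).le)
  intro t ht
  have h := hmono (left_mem_Icc.2 (ht.1.trans ht.2)) ht ht.1
  simp only [E, intervalIntegral.integral_same, exp_zero, mul_one] at h
  exact (mul_nonneg_iff_of_pos_right (exp_pos _)).1 (hx₀.trans h)

theorem forall_Ici_of_delay_induction {P : ℝ → Prop} {τ : ℝ} (hτ : 0 < τ)
    (hinit : ∀ t ∈ Icc (-τ) 0, P t)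
    (hstep : ∀ T ∈ Ici (0 : ℝ), (∀ s ∈ Icc (-τ) (T - τ), P s) → P T) :
    ∀ t ∈ Ici (-τ), P t := by
  have hsteps : ∀ n : ℕ, ∀ t ∈ Icc (-τ) (n * τ), P t := by
    intro n
    induction n with
    | zero => simpa using hinit
    | succ n ih =>
      intro t ht
      rcases le_total t 0 with h | h
      · exact hinit t ⟨ht.1, h⟩
      · refine hstep t h fun s hs => ih s ⟨hs.1, ?_⟩
        have := ht.2
        push_cast at this
        linarith [hs.2]
  intro t ht
  obtain ⟨n, hn⟩ := exists_nat_gt (t / τ)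
  exact hsteps n t ⟨ht, ((div_lt_iff₀ hτ).1 hn).le⟩

theorem nonneg_of_hasDerivAt_delay {x a y : ℝ → ℝ} {c τ : ℝ} (hτ : 0 < τ) (hc : 0 ≤ c)
    (ha : Continuous a)
    (hx : ∀ t ∈ Ici (0 : ℝ), HasDerivAt x (-a t * x t + c * x (t - τ) * y (t - τ)) t)
    (hy : ∀ t ∈ Ici (-τ), 0 ≤ y t) (hinit : ∀ t ∈ Icc (-τ) 0, 0 ≤ x t) :
    ∀ t ∈ Ici (-τ), 0 ≤ x t :=
  forall_Ici_of_delay_induction hτ hinit fun T hT hprev =>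
    nonneg_of_hasDerivAt_linear ha (fun t ht => hx t ht.1)
      (fun t ht => mul_nonneg
        (mul_nonneg hc (hprev (t - τ) ⟨by linarith [ht.1], by linarith [ht.2]⟩))
        (hy (t - τ) (mem_Ici.2 (by linarith [ht.1]))))
      (hinit 0 ⟨by linarith, le_rfl⟩) T ⟨hT, le_rfl⟩

theorem stmt_7_general
    (K r τ : ℝ) (hK : 0 < K) (hr : 0 < r) (hτ : 0 < τ)
    (m p q u : ℝ → ℝ)
    (hmc : Continuous m) (huc : Continuous u)
    (hdm : ∀ t : ℝ, 0 ≤ t →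
      HasDerivAt m (-(r / K) * m t * u t + 2 * (r / K) * m (t - τ) * u (t - τ)) t)
    (hdp : ∀ t : ℝ, 0 ≤ t →
      HasDerivAt p ((r / K) * m t * u t - (r / K) * m (t - τ) * u (t - τ)) t)
    (hdq : ∀ t : ℝ, 0 ≤ t →
      HasDerivAt q ((r / K) * m t * u t - (r / K) * m (t - τ) * u (t - τ)) t)
    (hdu : ∀ t : ℝ, 0 ≤ t → HasDerivAt u (-(r / K) * m t * u t) t)
    (hmnn : ∀ θ ∈ Set.Icc (-τ) (0 : ℝ), 0 ≤ m θ)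
    (hunn : ∀ θ ∈ Set.Icc (-τ) (0 : ℝ), 0 ≤ u θ)
    (hsum : m 0 + p 0 + q 0 + u 0 = K)
    (hpin : p 0 = (r / K) * ∫ s in (-τ)..(0 : ℝ), m s * u s)
    (hqin : q 0 = (r / K) * ∫ s in (-τ)..(0 : ℝ), m s * u s)
:
    ∀ t : ℝ, 0 ≤ t →
      (0 ≤ m t ∧ 0 ≤ p t ∧ 0 ≤ q t ∧ 0 ≤ u t) ∧
      m t + p t + q t + u t = K ∧
      p t = (r / K) * (∫ s in (t - τ)..t, m s * u s) ∧
      q t = (r / K) * ∫ s in (t - τ)..t, m s * u s := by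
  have hc : 0 ≤ r / K := (div_pos hr hK).le
  have hu : ∀ t ∈ Ici (-τ), 0 ≤ u t := by
    intro t ht
    rcases le_total t 0 with h | h
    · exact hunn t ⟨ht, h⟩
    · exact nonneg_of_hasDerivAt_linear (a := fun t => r / K * m t) (b := 0)
        (continuous_const.mul hmc) (fun s hs => (hdu s hs.1).congr_deriv (by simp))
        (fun _ _ => le_rfl) (hunn 0 ⟨by linarith, le_rfl⟩) t ⟨h, le_rfl⟩
  have hm : ∀ t ∈ Ici (-τ), 0 ≤ m t :=
    nonneg_of_hasDerivAt_delay (a := fun t => r / K * u t) (c := 2 * (r / K)) hτ (by positivity)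
      (continuous_const.mul huc)
      (fun t ht => (hdm t ht).congr_deriv (by ring)) hu hmnn
  have hmass : EqOn (fun t => m t + p t + q t + u t) (fun _ => K) (Ici 0) :=
    eqOn_Ici_of_hasDerivAt_eq (f' := 0)
      (fun t ht => ((((hdm t ht).add (hdp t ht)).add (hdq t ht)).add (hdu t ht)).congr_deriv
        (by simp only [Pi.zero_apply]; ring))
      (fun t _ => hasDerivAt_const t K) hsum
  have hrep : ∀ f : ℝ → ℝ,
      (∀ t ∈ Ici (0 : ℝ),
        HasDerivAt f ((r / K) * m t * u t - (r / K) * m (t - τ) * u (t - τ)) t) →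
      f 0 = (r / K) * ∫ s in (-τ)..(0 : ℝ), m s * u s →
      EqOn f (fun t => (r / K) * ∫ s in (t - τ)..t, m s * u s) (Ici 0) :=
    fun f hf hf₀ => eqOn_Ici_of_hasDerivAt_eq hf
      (fun t _ => ((hasDerivAt_integral_sub_delay (hmc.mul huc) τ t).const_mul
        (r / K)).congr_deriv (by simp only [Pi.mul_apply]; ring))
      (by rwa [zero_sub])
  intro t ht
  have hint : 0 ≤ ∫ s in (t - τ)..t, m s * u s :=
    intervalIntegral.integral_nonneg (by linarith) fun s hs =>
      mul_nonneg (hm s (mem_Ici.2 (by linarith [hs.1]))) (hu s (mem_Ici.2 (by linarith [hs.1])))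
  have hp := hrep p hdp hpin ht
  have hq := hrep q hdq hqin ht
  exact ⟨⟨hm t (mem_Ici.2 (by linarith)), hp ▸ mul_nonneg hc hint, hq ▸ mul_nonneg hc hint,
    hu t (mem_Ici.2 (by linarith))⟩, hmass ht, hp, hq⟩

theorem stmt_7
    (K r τ : ℝ) (hK : 0 < K) (hr : 0 < r) (hτ : 0 < τ)
    (m p q u : ℝ → ℝ)
    (hmc : Continuous m) (hpc : Continuous p) (hqc : Continuous q) (huc : Continuous u)
    (hdm : ∀ t : ℝ, 0 ≤ t →
      HasDerivAt m (-(r / K) * m t * u t + 2 * (r / K) * m (t - τ) * u (t - τ)) t)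
    (hdp : ∀ t : ℝ, 0 ≤ t →
      HasDerivAt p ((r / K) * m t * u t - (r / K) * m (t - τ) * u (t - τ)) t)
    (hdq : ∀ t : ℝ, 0 ≤ t →
      HasDerivAt q ((r / K) * m t * u t - (r / K) * m (t - τ) * u (t - τ)) t)
    (hdu : ∀ t : ℝ, 0 ≤ t → HasDerivAt u (-(r / K) * m t * u t) t)
    (hmnn : ∀ θ ∈ Set.Icc (-τ) (0 : ℝ), 0 ≤ m θ)
    (hpnn : ∀ θ ∈ Set.Icc (-τ) (0 : ℝ), 0 ≤ p θ)
    (hqnn : ∀ θ ∈ Set.Icc (-τ) (0 : ℝ), 0 ≤ q θ)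
    (hunn : ∀ θ ∈ Set.Icc (-τ) (0 : ℝ), 0 ≤ u θ)
    (hsum : m 0 + p 0 + q 0 + u 0 = K)
    (hpin : p 0 = (r / K) * ∫ s in (-τ)..(0 : ℝ), m s * u s)
    (hqin : q 0 = (r / K) * ∫ s in (-τ)..(0 : ℝ), m s * u s)
:
    ∀ t : ℝ, 0 ≤ t →
      (0 ≤ m t ∧ 0 ≤ p t ∧ 0 ≤ q t ∧ 0 ≤ u t) ∧
      m t + p t + q t + u t = K ∧
      p t = (r / K) * (∫ s in (t - τ)..t, m s * u s) ∧
      q t = (r / K) * ∫ s in (t - τ)..t, m s * u s :=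
  stmt_7_general K r τ hK hr hτ m p q u hmc huc hdm hdp hdq hdu hmnn hunn hsum hpin hqin
end

section
/- Under the feasibility conditions, if m(t) → 0 as t → ∞, then p(t) → 0 and q(t) → 0 as t → ∞. -/
/-!
Let `c = r / K`. The equation for `u` is linear, so `u` keeps the sign of `u 0 ≥ 0`;
the equation for `m` is linear in `m t` with a forcing term `2 c m (t - τ) u (t - τ)`, so the
method of steps propagates `m ≥ 0` from `[-τ, 0]` to every interval `[0, nτ]`. Then
`u' = -c m u ≤ 0`, so `u` is bounded by `u 0` and `c m u → 0`. Finally `p` and `q` have the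
derivative of the sliding integral `∫_{t-τ}^t c m u` and agree with it at `0`, hence everywhere
on `[0, ∞)`, and a sliding integral of length `τ` of a function tending to `0` tends to `0`.
-/

open Set Filter Topology

lemma nonneg_of_hasDerivAt_mul_add {f a b : ℝ → ℝ} {t₀ T : ℝ} (ha : Continuous a)
    (hd : ∀ t ∈ Icc t₀ T, HasDerivAt f (a t * f t + b t) t)
    (hb : ∀ t ∈ Icc t₀ T, 0 ≤ b t) (h₀ : 0 ≤ f t₀) :
    ∀ t ∈ Icc t₀ T, 0 ≤ f t := by
  set A : ℝ → ℝ := fun t => ∫ s in t₀..t, a s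
  have hA : ∀ t, HasDerivAt (fun t => Real.exp (-A t)) (-a t * Real.exp (-A t)) t := fun t => by
    simpa [mul_comm] using ((ha.integral_hasStrictDerivAt t₀ t).hasDerivAt.neg).exp
  have hg : ∀ t ∈ Icc t₀ T,
      HasDerivAt (fun t => f t * Real.exp (-A t)) (b t * Real.exp (-A t)) t := fun t ht =>
    ((hd t ht).mul (hA t)).congr_deriv (by ring)
  have hmono : MonotoneOn (fun t => f t * Real.exp (-A t)) (Icc t₀ T) := by
    refine monotoneOn_of_hasDerivWithinAt_nonneg (convex_Icc t₀ T)
      (fun t ht => (hg t ht).continuousAt.continuousWithinAt)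
      (fun t ht => (hg t (interior_subset ht)).hasDerivWithinAt)
      (fun t ht => mul_nonneg (hb t (interior_subset ht)) (Real.exp_pos _).le)
  intro t ht
  have hle := hmono ⟨le_rfl, ht.1.trans ht.2⟩ ht ht.1
  simp only [A, intervalIntegral.integral_same, neg_zero, Real.exp_zero, mul_one] at hle
  exact nonneg_of_mul_nonneg_left (h₀.trans hle) (Real.exp_pos _)

lemma nonneg_of_hasDerivAt_delay_s10 {f a b : ℝ → ℝ} {τ : ℝ} (hτ : 0 < τ) (ha : Continuous a)
    (hd : ∀ t, 0 ≤ t → HasDerivAt f (a t * f t + b t * f (t - τ)) t)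
    (hb : ∀ t, 0 ≤ t → 0 ≤ b t) (hinit : ∀ θ ∈ Icc (-τ) 0, 0 ≤ f θ) :
    ∀ t, -τ ≤ t → 0 ≤ f t := by
  have hsteps : ∀ n : ℕ, ∀ t ∈ Icc (-τ) (n * τ), 0 ≤ f t := by
    intro n
    induction n with
    | zero => simpa using hinit
    | succ n ih =>
      intro t ht
      rcases le_or_gt t 0 with ht0 | ht0
      · exact hinit t ⟨ht.1, ht0⟩
      refine nonneg_of_hasDerivAt_mul_add ha (fun s hs => hd s hs.1)
        (fun s hs => mul_nonneg (hb s hs.1) (ih _ ⟨?_, ?_⟩))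
        (hinit 0 ⟨by linarith, le_rfl⟩) t ⟨ht0.le, ht.2⟩
      · linarith [hs.1]
      · push_cast at hs; linarith [hs.2]
  intro t ht
  obtain ⟨n, hn⟩ := exists_nat_ge (t / τ)
  exact hsteps n t ⟨ht, (div_le_iff₀ hτ).1 hn⟩

lemma eq_intervalIntegral_of_hasDerivAt_sub_comp_sub {p f : ℝ → ℝ} {τ : ℝ}
    (hf : Continuous f) (hd : ∀ t, 0 ≤ t → HasDerivAt p (f t - f (t - τ)) t)
    (h₀ : p 0 = ∫ s in -τ..0, f s) :
    ∀ t, 0 ≤ t → p t = ∫ s in (t - τ)..t, f s := by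
  set G : ℝ → ℝ := fun t => ∫ s in (0 : ℝ)..t, f s
  have hG : ∀ t, HasDerivAt G (f t) t := fun t => (hf.integral_hasStrictDerivAt 0 t).hasDerivAt
  have hwindow : ∀ t, ∫ s in (t - τ)..t, f s = G t - G (t - τ) := fun t =>
    (intervalIntegral.integral_interval_sub_left (hf.intervalIntegrable _ _)
      (hf.intervalIntegrable _ _)).symm
  have hdiff : ∀ t, 0 ≤ t → HasDerivAt (fun t => p t - (G t - G (t - τ))) 0 t := by
    intro t ht
    have hshift := (hG (t - τ)).comp t ((hasDerivAt_id t).sub_const τ)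
    exact ((hd t ht).sub ((hG t).sub hshift)).congr_deriv (by ring)
  have hconst : ∀ t, 0 ≤ t → p t - (G t - G (t - τ)) = p 0 - (G 0 - G (0 - τ)) :=
    fun t ht => constant_of_has_deriv_right_zero
      (fun s hs => (hdiff s hs.1).continuousAt.continuousWithinAt)
      (fun s hs => (hdiff s hs.1).hasDerivWithinAt) t ⟨ht, le_rfl⟩
  intro t ht
  have h₀' : p 0 - (G 0 - G (0 - τ)) = 0 := by rw [h₀, ← hwindow, zero_sub, sub_self]
  rw [hwindow]
  linarith [hconst t ht]

lemma tendsto_intervalIntegral_sub_of_tendsto_zero {E : Type*} [NormedAddCommGroup E]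
    [NormedSpace ℝ E] {f : ℝ → E} (τ : ℝ) (hf : Tendsto f atTop (𝓝 0)) :
    Tendsto (fun t => ∫ s in (t - τ)..t, f s) atTop (𝓝 0) := by
  rw [Metric.tendsto_atTop] at hf ⊢
  intro ε hε
  obtain ⟨N, hN⟩ := hf (ε / (|τ| + 1)) (by positivity)
  refine ⟨N + |τ|, fun t ht => ?_⟩
  have hbound : ∀ s ∈ uIoc (t - τ) t, ‖f s‖ ≤ ε / (|τ| + 1) := by
    intro s hs
    have hs' : t - |τ| ≤ s := by
      rcases le_total (t - τ) t with h | h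
      · rw [uIoc_of_le h] at hs; linarith [hs.1, le_abs_self τ]
      · rw [uIoc_of_ge h] at hs; linarith [hs.1, abs_nonneg τ]
    simpa using (hN s (by linarith)).le
  rw [dist_zero_right]
  calc ‖∫ s in (t - τ)..t, f s‖ ≤ ε / (|τ| + 1) * |t - (t - τ)| :=
        intervalIntegral.norm_integral_le_of_norm_le_const hbound
    _ = ε * (|τ| / (|τ| + 1)) := by rw [sub_sub_cancel]; ring
    _ < ε * 1 := by gcongr; rw [div_lt_one (by positivity)]; linarith
    _ = ε := mul_one ε

lemma tendsto_zero_of_hasDerivAt_sub_comp_sub {p f : ℝ → ℝ} {τ : ℝ} (hf : Continuous f)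
    (hf₀ : Tendsto f atTop (𝓝 0)) (hd : ∀ t, 0 ≤ t → HasDerivAt p (f t - f (t - τ)) t)
    (h₀ : p 0 = ∫ s in -τ..0, f s) : Tendsto p atTop (𝓝 0) :=
  (tendsto_intervalIntegral_sub_of_tendsto_zero τ hf₀).congr' <| by
    filter_upwards [eventually_ge_atTop 0] with t ht
    exact (eq_intervalIntegral_of_hasDerivAt_sub_comp_sub hf hd h₀ t ht).symm

theorem stmt_10_general
    (K r τ : ℝ) (hK : 0 < K) (hr : 0 < r) (hτ : 0 < τ)
    (m p q u : ℝ → ℝ)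
    (hmc : Continuous m) (huc : Continuous u)
    (hdm : ∀ t : ℝ, 0 ≤ t →
      HasDerivAt m (-(r / K) * m t * u t + 2 * (r / K) * m (t - τ) * u (t - τ)) t)
    (hdp : ∀ t : ℝ, 0 ≤ t →
      HasDerivAt p ((r / K) * m t * u t - (r / K) * m (t - τ) * u (t - τ)) t)
    (hdq : ∀ t : ℝ, 0 ≤ t →
      HasDerivAt q ((r / K) * m t * u t - (r / K) * m (t - τ) * u (t - τ)) t)
    (hdu : ∀ t : ℝ, 0 ≤ t → HasDerivAt u (-(r / K) * m t * u t) t)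
    (hmnn : ∀ θ ∈ Set.Icc (-τ) (0 : ℝ), 0 ≤ m θ)
    (hunn : ∀ θ ∈ Set.Icc (-τ) (0 : ℝ), 0 ≤ u θ)
    (hpin : p 0 = (r / K) * ∫ s in (-τ)..(0 : ℝ), m s * u s)
    (hqin : q 0 = (r / K) * ∫ s in (-τ)..(0 : ℝ), m s * u s)
    (hmlim : Filter.Tendsto m Filter.atTop (nhds 0))
:
    Filter.Tendsto p Filter.atTop (nhds 0) ∧ Filter.Tendsto q Filter.atTop (nhds 0) := by
  have hc : 0 ≤ r / K := div_nonneg hr.le hK.le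
  have hu₀ : 0 ≤ u 0 := hunn 0 ⟨by linarith, le_rfl⟩
  have hu : ∀ t, -τ ≤ t → 0 ≤ u t := by
    intro t ht
    rcases le_or_gt t 0 with ht0 | ht0
    · exact hunn t ⟨ht, ht0⟩
    exact nonneg_of_hasDerivAt_mul_add (a := fun s => -(r / K) * m s) (b := 0)
      (continuous_const.mul hmc)
      (fun s hs => (hdu s hs.1).congr_deriv (by simp only [Pi.zero_apply, add_zero]))
      (fun _ _ => le_rfl) hu₀ t ⟨ht0.le, le_rfl⟩
  have hm : ∀ t, 0 ≤ t → 0 ≤ m t := fun t ht =>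
    nonneg_of_hasDerivAt_delay_s10 (a := fun s => -(r / K) * u s)
      (b := fun s => 2 * (r / K) * u (s - τ)) hτ (continuous_const.mul huc)
      (fun s hs => (hdm s hs).congr_deriv (by ring))
      (fun s hs => mul_nonneg (by positivity) (hu (s - τ) (by linarith))) hmnn t (by linarith)
  have hu_le : ∀ t, 0 ≤ t → u t ≤ u 0 := fun t ht =>
    antitoneOn_of_hasDerivWithinAt_nonpos (convex_Ici 0)
      (fun s hs => (hdu s hs).continuousAt.continuousWithinAt)
      (fun s hs => (hdu s (interior_subset hs)).hasDerivWithinAt)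
      (fun s hs => by
        have hs : 0 ≤ s := interior_subset hs
        have := mul_nonneg (mul_nonneg hc (hm s hs)) (hu s (by linarith))
        linarith)
      self_mem_Ici ht ht
  have hmu : Tendsto (fun s => r / K * m s * u s) atTop (𝓝 0) := by
    have hcm : Tendsto (fun s => r / K * m s) atTop (𝓝 0) := by
      simpa using hmlim.const_mul (r / K)
    refine hcm.zero_mul_isBoundedUnder_le (isBoundedUnder_of_eventually_le (a := u 0) ?_)
    filter_upwards [eventually_ge_atTop 0] with t ht
    simpa [abs_of_nonneg (hu t (by linarith))] using hu_le t ht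
  have hcont : Continuous fun s => r / K * m s * u s := by fun_prop
  have hinit : (r / K) * ∫ s in (-τ)..(0 : ℝ), m s * u s =
      ∫ s in (-τ)..(0 : ℝ), r / K * m s * u s := by
    simp only [mul_assoc, intervalIntegral.integral_const_mul]
  exact ⟨tendsto_zero_of_hasDerivAt_sub_comp_sub hcont hmu hdp (hpin.trans hinit),
    tendsto_zero_of_hasDerivAt_sub_comp_sub hcont hmu hdq (hqin.trans hinit)⟩

theorem stmt_10
    (K r τ : ℝ) (hK : 0 < K) (hr : 0 < r) (hτ : 0 < τ)
    (m p q u : ℝ → ℝ)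
    (hmc : Continuous m) (hpc : Continuous p) (hqc : Continuous q) (huc : Continuous u)
    (hdm : ∀ t : ℝ, 0 ≤ t →
      HasDerivAt m (-(r / K) * m t * u t + 2 * (r / K) * m (t - τ) * u (t - τ)) t)
    (hdp : ∀ t : ℝ, 0 ≤ t →
      HasDerivAt p ((r / K) * m t * u t - (r / K) * m (t - τ) * u (t - τ)) t)
    (hdq : ∀ t : ℝ, 0 ≤ t →
      HasDerivAt q ((r / K) * m t * u t - (r / K) * m (t - τ) * u (t - τ)) t)
    (hdu : ∀ t : ℝ, 0 ≤ t → HasDerivAt u (-(r / K) * m t * u t) t)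
    (hmnn : ∀ θ ∈ Set.Icc (-τ) (0 : ℝ), 0 ≤ m θ)
    (hpnn : ∀ θ ∈ Set.Icc (-τ) (0 : ℝ), 0 ≤ p θ)
    (hqnn : ∀ θ ∈ Set.Icc (-τ) (0 : ℝ), 0 ≤ q θ)
    (hunn : ∀ θ ∈ Set.Icc (-τ) (0 : ℝ), 0 ≤ u θ)
    (hsum : m 0 + p 0 + q 0 + u 0 = K)
    (hpin : p 0 = (r / K) * ∫ s in (-τ)..(0 : ℝ), m s * u s)
    (hqin : q 0 = (r / K) * ∫ s in (-τ)..(0 : ℝ), m s * u s)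
    (hmlim : Filter.Tendsto m Filter.atTop (nhds 0))
:
    Filter.Tendsto p Filter.atTop (nhds 0) ∧ Filter.Tendsto q Filter.atTop (nhds 0) :=
  stmt_10_general K r τ hK hr hτ m p q u hmc huc hdm hdp hdq hdu hmnn hunn hpin hqin hmlim
end

section
/- Key step of Theorem 1: under the feasibility conditions, if m(0) > 0, then u(t) → 0 as t → ∞. -/
/-!
For `t ≥ 0`, `u` solves the linear equation `u' = -(r/K) m u`, so
`u t = u 0 * exp (-(r/K) ∫₀ᵗ m)`, and it suffices that `∫₀ᵗ m → ∞`. An integrating factor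
shows `u ≥ 0` and, by a first-zero argument, `m > 0`; hence `u` decreases to a limit `L ≤ u 0`.
Conservation of `m + u + p + q` gives `m t = E + u t - 2 u (t - τ)` for `t ≥ τ`, with
`E = m 0 + u 0 + 2 p 0`, so `m t → E - L ≥ m 0 > 0` and the integral of `m` diverges.
-/

open Filter Set Topology Real intervalIntegral

section RealAnalysis

variable {f f' : ℝ → ℝ} {a : ℝ}

lemma monotoneOn_of_forall_hasDerivAt_nonneg {D : Set ℝ} (hD : Convex ℝ D)
    (hf : ∀ x ∈ D, HasDerivAt f (f' x) x) (hf' : ∀ x ∈ interior D, 0 ≤ f' x) :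
    MonotoneOn f D :=
  monotoneOn_of_hasDerivWithinAt_nonneg hD (fun x hx => (hf x hx).continuousAt.continuousWithinAt)
    (fun x hx => (hf x (interior_subset hx)).hasDerivWithinAt) hf'

lemma antitoneOn_of_forall_hasDerivAt_nonpos {D : Set ℝ} (hD : Convex ℝ D)
    (hf : ∀ x ∈ D, HasDerivAt f (f' x) x) (hf' : ∀ x ∈ interior D, f' x ≤ 0) :
    AntitoneOn f D :=
  antitoneOn_of_hasDerivWithinAt_nonpos hD (fun x hx => (hf x hx).continuousAt.continuousWithinAt)
    (fun x hx => (hf x (interior_subset hx)).hasDerivWithinAt) hf'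

lemma eq_of_hasDerivAt_zero_of_le (hf : ∀ t, a ≤ t → HasDerivAt f 0 t) {t : ℝ}
    (ht : a ≤ t) : f t = f a :=
  le_antisymm
    (antitoneOn_of_forall_hasDerivAt_nonpos (convex_Ici a) hf (fun _ _ => le_rfl)
      self_mem_Ici ht ht)
    (monotoneOn_of_forall_hasDerivAt_nonneg (convex_Ici a) hf (fun _ _ => le_rfl)
      self_mem_Ici ht ht)

lemma hasDerivAt_mul_exp_integral {g : ℝ → ℝ} (hg : Continuous g) {b x : ℝ}
    (hf : HasDerivAt f (-g x * f x + b) x) :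
    HasDerivAt (fun t => f t * exp (∫ s in a..t, g s)) (b * exp (∫ s in a..x, g s)) x :=
  (hf.mul (hg.integral_hasStrictDerivAt a x).hasDerivAt.exp).congr_deriv (by ring)

lemma pos_of_forall_Ico_pos (hf : ContinuousOn f (Ici a)) (ha : 0 < f a)
    (hstep : ∀ t, a < t → (∀ s ∈ Ico a t, 0 < f s) → 0 < f t) {t : ℝ} (ht : a ≤ t) :
    0 < f t := by
  by_contra! hft
  set S := Ici a ∩ f ⁻¹' Iic 0
  have hS : IsClosed S := hf.preimage_isClosed_of_isClosed isClosed_Ici isClosed_Iic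
  have hbdd : BddBelow S := ⟨a, fun _ hs => hs.1⟩
  have hmem : sInf S ∈ S := hS.csInf_mem ⟨t, ht, hft⟩ hbdd
  have hbefore : ∀ s ∈ Ico a (sInf S), 0 < f s := fun s hs => by
    by_contra! hfs
    exact (csInf_le hbdd ⟨hs.1, hfs⟩).not_gt hs.2
  have hlt : a < sInf S := lt_of_le_of_ne hmem.1 fun h => (h ▸ ha).not_ge hmem.2
  exact (hstep _ hlt hbefore).not_ge hmem.2

lemma AntitoneOn.exists_tendsto_atTop (hf : AntitoneOn f (Ici a)) (hbdd : BddBelow (f '' Ici a)) :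
    ∃ L, Tendsto f atTop (𝓝 L) := by
  have hanti : Antitone fun t => f (max t a) := fun s t hst =>
    hf (le_max_right s a) (le_max_right t a) (max_le_max hst le_rfl)
  have hbdd' : BddBelow (range fun t => f (max t a)) :=
    hbdd.mono (range_subset_iff.2 fun t => mem_image_of_mem f (le_max_right t a))
  refine ⟨_, (tendsto_atTop_ciInf hanti hbdd').congr' ?_⟩
  filter_upwards [eventually_ge_atTop a] with t ht
  rw [max_eq_left ht]

lemma tendsto_integral_atTop_of_tendsto_pos (hf : Continuous f) {M : ℝ} (hM : 0 < M)
    (hlim : Tendsto f atTop (𝓝 M)) : Tendsto (fun t => ∫ s in a..t, f s) atTop atTop := by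
  obtain ⟨T, hT⟩ := eventually_atTop.1 (hlim.eventually (eventually_ge_nhds (half_lt_self hM)))
  have hlin : Tendsto (fun t => (∫ s in a..T, f s) + (t - T) * (M / 2)) atTop atTop :=
    tendsto_atTop_add_const_left _ _ <|
      (tendsto_atTop_add_const_right _ _ tendsto_id).atTop_mul_const (half_pos hM)
  refine tendsto_atTop_mono' _ ?_ hlin
  filter_upwards [eventually_ge_atTop T] with t ht
  rw [← integral_add_adjacent_intervals (hf.intervalIntegrable a T) (hf.intervalIntegrable T t)]
  have hlow : ∫ _ in T..t, M / 2 ≤ ∫ s in T..t, f s :=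
    integral_mono_on ht intervalIntegrable_const (hf.intervalIntegrable T t)
      fun s hs => hT s hs.1
  rw [integral_const, smul_eq_mul] at hlow
  linarith

end RealAnalysis

namespace DelaySystem

variable {c τ : ℝ} {m u : ℝ → ℝ}

lemma u_mul_exp_integral_eq (hmc : Continuous m)
    (hdu : ∀ t, 0 ≤ t → HasDerivAt u (-c * m t * u t) t) {t : ℝ} (ht : 0 ≤ t) :
    u t * exp (∫ s in 0..t, c * m s) = u 0 := by
  have hd : ∀ x, 0 ≤ x → HasDerivAt (fun t => u t * exp (∫ s in 0..t, c * m s)) 0 x :=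
    fun x hx => by
      simpa using hasDerivAt_mul_exp_integral (hmc.const_mul c)
        ((hdu x hx).congr_deriv (by ring : _ = -(c * m x) * u x + 0))
  simpa using eq_of_hasDerivAt_zero_of_le hd ht

lemma u_nonneg (hmc : Continuous m) (hdu : ∀ t, 0 ≤ t → HasDerivAt u (-c * m t * u t) t)
    (hu0 : 0 ≤ u 0) {t : ℝ} (ht : 0 ≤ t) : 0 ≤ u t :=
  (mul_nonneg_iff_of_pos_right (exp_pos _)).1 (u_mul_exp_integral_eq hmc hdu ht ▸ hu0)

/-- `m` stays positive: `m t * exp (∫ c u)` is nondecreasing as long as the delayed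
term `m (t - τ) * u (t - τ)` is nonnegative, which holds up to the first zero of `m`. -/
lemma m_pos (hτ : 0 ≤ τ) (hc : 0 ≤ c) (hmc : Continuous m) (huc : Continuous u)
    (hdm : ∀ t, 0 ≤ t →
      HasDerivAt m (-c * m t * u t + 2 * c * m (t - τ) * u (t - τ)) t)
    (hm_init : ∀ θ ∈ Icc (-τ) 0, 0 ≤ m θ) (hu : ∀ t, -τ ≤ t → 0 ≤ u t) (hm0 : 0 < m 0)
    {t : ℝ} (ht : 0 ≤ t) : 0 < m t := by
  refine pos_of_forall_Ico_pos hmc.continuousOn hm0 (fun t ht hpos => ?_) ht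
  have hdelay : ∀ s ∈ Ico (-τ) t, 0 ≤ m s * u s := fun s hs => by
    refine mul_nonneg ?_ (hu s hs.1)
    rcases lt_or_ge s 0 with hs0 | hs0
    exacts [hm_init s ⟨hs.1, hs0.le⟩, (hpos s ⟨hs0, hs.2⟩).le]
  have hψ : MonotoneOn (fun x => m x * exp (∫ s in 0..x, c * u s)) (Icc 0 t) := by
    refine monotoneOn_of_forall_hasDerivAt_nonneg (convex_Icc 0 t)
      (fun x hx => hasDerivAt_mul_exp_integral (huc.const_mul c)
        ((hdm x hx.1).congr_deriv
          (by ring : _ = -(c * u x) * m x + 2 * c * m (x - τ) * u (x - τ))))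
      (fun x hx => ?_)
    rw [interior_Icc] at hx
    have hprod := hdelay (x - τ) ⟨by linarith [hx.1], by linarith [hx.2]⟩
    rw [mul_assoc (2 * c)]
    exact mul_nonneg (mul_nonneg (mul_nonneg zero_le_two hc) hprod) (exp_pos _).le
  have h := hψ ⟨le_rfl, ht.le⟩ ⟨ht.le, le_rfl⟩ ht.le
  simp only [integral_same, exp_zero, mul_one] at h
  exact (mul_pos_iff_of_pos_right (exp_pos _)).1 (hm0.trans_le h)

lemma u_antitoneOn (hc : 0 ≤ c) (hdu : ∀ t, 0 ≤ t → HasDerivAt u (-c * m t * u t) t)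
    (hm : ∀ t, 0 ≤ t → 0 ≤ m t) (hu : ∀ t, 0 ≤ t → 0 ≤ u t) : AntitoneOn u (Ici 0) :=
  antitoneOn_of_forall_hasDerivAt_nonpos (convex_Ici 0) hdu fun x hx => by
    rw [interior_Ici] at hx
    have := mul_nonneg (mul_nonneg hc (hm x hx.le)) (hu x hx.le)
    linarith [neg_mul c (m x)]

/-- Conservation of `m + u + p + q`, written with `p t = q t = c ∫_{t-τ}^t m u`. -/
lemma conservation (hmc : Continuous m) (huc : Continuous u)
    (hdm : ∀ t, 0 ≤ t →
      HasDerivAt m (-c * m t * u t + 2 * c * m (t - τ) * u (t - τ)) t)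
    (hdu : ∀ t, 0 ≤ t → HasDerivAt u (-c * m t * u t) t) {t : ℝ} (ht : 0 ≤ t) :
    m t + u t + 2 * c * ∫ s in (t - τ)..t, m s * u s
      = m 0 + u 0 + 2 * c * ∫ s in (-τ)..0, m s * u s := by
  have hmu : Continuous fun s => m s * u s := hmc.mul huc
  have hsplit : ∀ x, ∫ s in (x - τ)..x, m s * u s
      = (∫ s in 0..x, m s * u s) - ∫ s in 0..(x - τ), m s * u s := fun x =>
    (integral_interval_sub_left (hmu.intervalIntegrable _ _) (hmu.intervalIntegrable _ _)).symm
  have hd : ∀ x, 0 ≤ x →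
      HasDerivAt (fun x => m x + u x + 2 * c * ∫ s in (x - τ)..x, m s * u s) 0 x := by
    intro x hx
    simp only [hsplit]
    have hG := (hmu.integral_hasStrictDerivAt 0 x).hasDerivAt
    have hGτ := (hmu.integral_hasStrictDerivAt 0 (x - τ)).hasDerivAt.comp_sub_const x τ
    exact (((hdm x hx).add (hdu x hx)).add ((hG.sub hGτ).const_mul (2 * c))).congr_deriv
      (by ring)
  simpa using eq_of_hasDerivAt_zero_of_le hd ht

lemma integral_delay_eq (hmc : Continuous m) (huc : Continuous u)
    (hdu : ∀ t, 0 ≤ t → HasDerivAt u (-c * m t * u t) t) (hτ : 0 ≤ τ) {t : ℝ} (ht : τ ≤ t) :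
    c * ∫ s in (t - τ)..t, m s * u s = u (t - τ) - u t := by
  have hftc := integral_eq_sub_of_hasDerivAt
    (fun x hx => hdu x (by linarith [(uIcc_of_le (by linarith : t - τ ≤ t) ▸ hx).1]))
    (((continuous_const.mul hmc).mul huc).intervalIntegrable (t - τ) t)
  simp only [mul_assoc, integral_const_mul] at hftc
  linarith

lemma tendsto_m_of_tendsto_u (hτ : 0 ≤ τ) (hmc : Continuous m) (huc : Continuous u)
    (hdm : ∀ t, 0 ≤ t →
      HasDerivAt m (-c * m t * u t + 2 * c * m (t - τ) * u (t - τ)) t)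
    (hdu : ∀ t, 0 ≤ t → HasDerivAt u (-c * m t * u t) t) {L : ℝ}
    (huL : Tendsto u atTop (𝓝 L)) :
    Tendsto m atTop (𝓝 (m 0 + u 0 + 2 * c * (∫ s in (-τ)..0, m s * u s) - L)) := by
  have hdelayed : Tendsto (fun t => u (t - τ)) atTop (𝓝 L) :=
    huL.comp (tendsto_atTop_add_const_right _ _ tendsto_id)
  have hlim := ((tendsto_const_nhds (x := m 0 + u 0 + 2 * c * ∫ s in (-τ)..0, m s * u s)).add
    huL).sub (hdelayed.const_mul 2)
  rw [show ∀ E : ℝ, E + L - 2 * L = E - L from fun E => by ring] at hlim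
  refine hlim.congr' ?_
  filter_upwards [eventually_ge_atTop τ] with t ht
  have hcons := conservation hmc huc hdm hdu (hτ.trans ht)
  have hdelay := integral_delay_eq hmc huc hdu hτ ht
  linarith

lemma tendsto_u_zero_of_tendsto_integral (hmc : Continuous m)
    (hdu : ∀ t, 0 ≤ t → HasDerivAt u (-c * m t * u t) t)
    (h : Tendsto (fun t => ∫ s in 0..t, c * m s) atTop atTop) : Tendsto u atTop (𝓝 0) := by
  have hlim := (tendsto_exp_neg_atTop_nhds_zero.comp h).const_mul (u 0)
  rw [mul_zero] at hlim
  refine hlim.congr' ?_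
  filter_upwards [eventually_ge_atTop 0] with t ht
  rw [← u_mul_exp_integral_eq hmc hdu ht, Function.comp_apply, exp_neg,
    mul_inv_cancel_right₀ (exp_pos _).ne']

end DelaySystem

theorem stmt_13_general
    (K r τ : ℝ) (hK : 0 < K) (hr : 0 < r) (hτ : 0 < τ)
    (m p u : ℝ → ℝ)
    (hmc : Continuous m) (huc : Continuous u)
    (hdm : ∀ t : ℝ, 0 ≤ t →
      HasDerivAt m (-(r / K) * m t * u t + 2 * (r / K) * m (t - τ) * u (t - τ)) t)
    (hdu : ∀ t : ℝ, 0 ≤ t → HasDerivAt u (-(r / K) * m t * u t) t)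
    (hmnn : ∀ θ ∈ Set.Icc (-τ) (0 : ℝ), 0 ≤ m θ)
    (hpnn : ∀ θ ∈ Set.Icc (-τ) (0 : ℝ), 0 ≤ p θ)
    (hunn : ∀ θ ∈ Set.Icc (-τ) (0 : ℝ), 0 ≤ u θ)
    (hpin : p 0 = (r / K) * ∫ s in (-τ)..(0 : ℝ), m s * u s)
    (hmpos : 0 < m 0)
:
    Filter.Tendsto u Filter.atTop (nhds 0) := by
  have hc : 0 < r / K := div_pos hr hK
  have hzero : (0 : ℝ) ∈ Icc (-τ) 0 := ⟨by linarith, le_rfl⟩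
  have hu : ∀ t, -τ ≤ t → 0 ≤ u t := fun t ht =>
    (le_or_gt 0 t).elim (DelaySystem.u_nonneg hmc hdu (hunn 0 hzero))
      fun ht0 => hunn t ⟨ht, ht0.le⟩
  have hm : ∀ t, 0 ≤ t → 0 < m t := fun t =>
    DelaySystem.m_pos hτ.le hc.le hmc huc hdm hmnn hu hmpos
  have hanti : AntitoneOn u (Ici 0) :=
    DelaySystem.u_antitoneOn hc.le hdu (fun t ht => (hm t ht).le) fun t ht => hu t (by linarith)
  obtain ⟨L, huL⟩ := hanti.exists_tendsto_atTop
    ⟨0, by rintro _ ⟨t, ht, rfl⟩; exact hu t (by linarith [mem_Ici.1 ht])⟩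
  have hLu0 : L ≤ u 0 := le_of_tendsto huL <| by
    filter_upwards [eventually_ge_atTop 0] with t ht
    exact hanti self_mem_Ici ht ht
  have hmlim := DelaySystem.tendsto_m_of_tendsto_u hτ.le hmc huc hdm hdu huL
  rw [mul_assoc 2, ← hpin] at hmlim
  have hM : 0 < m 0 + u 0 + 2 * p 0 - L := by linarith [hpnn 0 hzero]
  exact DelaySystem.tendsto_u_zero_of_tendsto_integral hmc hdu
    (tendsto_integral_atTop_of_tendsto_pos (hmc.const_mul _) (mul_pos hc hM) (hmlim.const_mul _))

theorem stmt_13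
    (K r τ : ℝ) (hK : 0 < K) (hr : 0 < r) (hτ : 0 < τ)
    (m p q u : ℝ → ℝ)
    (hmc : Continuous m) (hpc : Continuous p) (hqc : Continuous q) (huc : Continuous u)
    (hdm : ∀ t : ℝ, 0 ≤ t →
      HasDerivAt m (-(r / K) * m t * u t + 2 * (r / K) * m (t - τ) * u (t - τ)) t)
    (hdp : ∀ t : ℝ, 0 ≤ t →
      HasDerivAt p ((r / K) * m t * u t - (r / K) * m (t - τ) * u (t - τ)) t)
    (hdq : ∀ t : ℝ, 0 ≤ t →
      HasDerivAt q ((r / K) * m t * u t - (r / K) * m (t - τ) * u (t - τ)) t)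
    (hdu : ∀ t : ℝ, 0 ≤ t → HasDerivAt u (-(r / K) * m t * u t) t)
    (hmnn : ∀ θ ∈ Set.Icc (-τ) (0 : ℝ), 0 ≤ m θ)
    (hpnn : ∀ θ ∈ Set.Icc (-τ) (0 : ℝ), 0 ≤ p θ)
    (hqnn : ∀ θ ∈ Set.Icc (-τ) (0 : ℝ), 0 ≤ q θ)
    (hunn : ∀ θ ∈ Set.Icc (-τ) (0 : ℝ), 0 ≤ u θ)
    (hsum : m 0 + p 0 + q 0 + u 0 = K)
    (hpin : p 0 = (r / K) * ∫ s in (-τ)..(0 : ℝ), m s * u s)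
    (hqin : q 0 = (r / K) * ∫ s in (-τ)..(0 : ℝ), m s * u s)
    (hmpos : 0 < m 0)
:
    Filter.Tendsto u Filter.atTop (nhds 0) :=
  stmt_13_general K r τ hK hr hτ m p u hmc huc hdm hdu hmnn hpnn hunn hpin hmpos
end
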